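/- In the first-order Gaussian ISI channel, for an interval W = {a,...,a+k−1} ⊆ {1,...,N}, Rel(W) = Σ_{i=a}^{a+k−1} Rel({i}) + (4h₀h₁/σ²) Σ_{i=a}^{a+k−2} (2·𝟙[x*_i = x*_{i+1}] − 1). -/

import Mathlib

/-- Gaussian density with mean `μ` and variance `σ²`, evaluated at `y`. -/
noncomputable def gpdf (σ μ y : ℝ) : ℝ :=
  (1 / Real.sqrt (2 * Real.pi * σ ^ 2)) * Real.exp (-(y - μ) ^ 2 / (2 * σ ^ 2))

/-- BPSK mapping of a bit. -/
def bval (b : Bool) : ℝ := if b then 1 else 0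

/-- Flip the bits of `x` at the positions in `S`. -/
def flipSeq (S : Finset ℕ) (x : ℕ → Bool) : ℕ → Bool :=
  fun i => if i ∈ S then !(x i) else x i

/-- `ln P(y_i | x_{i-1}, x_i)` for the first-order Gaussian ISI channel with BPSK. -/
noncomputable def gaussLL (h0 h1 σ : ℝ) (y : ℕ → ℝ) (i : ℕ) (bprev b : Bool) : ℝ :=
  Real.log (gpdf σ (h0 * (1 - 2 * bval b) + h1 * (1 - 2 * bval bprev)) (y i))

/-- First-order weight function for the Gaussian ISI channel. -/
noncomputable def Lam1 (N : ℕ) (h0 h1 σ : ℝ) (y : ℕ → ℝ) (x : ℕ → Bool) : ℝ :=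
  ∑ i ∈ Finset.Icc 1 N, gaussLL h0 h1 σ y i (x (i - 1)) (x i)

/-- Sequence reliability. -/
noncomputable def Rel1 (N : ℕ) (h0 h1 σ : ℝ) (y : ℕ → ℝ) (xs : ℕ → Bool)
    (S : Finset ℕ) : ℝ :=
  Lam1 N h0 h1 σ y xs - Lam1 N h0 h1 σ y (flipSeq S xs)

lemma gaussLL_eq (h0 h1 σ : ℝ) (hσ : σ ≠ 0) (y : ℕ → ℝ) (i : ℕ) (bp b : Bool) :
    gaussLL h0 h1 σ y i bp b =
      Real.log (1 / Real.sqrt (2 * Real.pi * σ ^ 2)) -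
        (y i - (h0 * (1 - 2 * bval b) + h1 * (1 - 2 * bval bp))) ^ 2 / (2 * σ ^ 2) := by
  have hσ2 : (0:ℝ) < 2 * Real.pi * σ ^ 2 := by
    have h1 : (0:ℝ) < σ ^ 2 := by positivity
    nlinarith [Real.pi_pos]
  have hs : (0:ℝ) < Real.sqrt (2 * Real.pi * σ ^ 2) := Real.sqrt_pos.mpr hσ2
  unfold gaussLL gpdf
  rw [Real.log_mul (by positivity) (Real.exp_ne_zero _), Real.log_exp]
  ring

lemma gaussLL_interior (h0 h1 σ : ℝ) (hσ : σ ≠ 0) (y : ℕ → ℝ) (i : ℕ) (bp b : Bool) :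
    gaussLL h0 h1 σ y i bp (!b) + gaussLL h0 h1 σ y i (!bp) b -
      gaussLL h0 h1 σ y i bp b - gaussLL h0 h1 σ y i (!bp) (!b) =
      4 * h0 * h1 / σ ^ 2 * (2 * (if bp = b then (1:ℝ) else 0) - 1) := by
  have h2 : σ ^ 2 ≠ 0 := pow_ne_zero _ hσ
  rw [gaussLL_eq _ _ _ hσ, gaussLL_eq _ _ _ hσ, gaussLL_eq _ _ _ hσ, gaussLL_eq _ _ _ hσ]
  rcases bp <;> rcases b <;> simp [bval] <;> field_simp <;> ring

/-- In the first-order Gaussian ISI channel, for an interval burst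
`W = {a, …, a+k−1} ⊆ {1,…,N}`:
`Rel(W) = Σ_i Rel({i}) + (4h₀h₁/σ²) Σ_i (2·𝟙[x*_i = x*_{i+1}] − 1)`. -/
theorem rel_interval_closed_form (N a k : ℕ) (h0 h1 σ : ℝ) (hσ : 0 < σ)
    (y : ℕ → ℝ) (xs : ℕ → Bool) (ha : 1 ≤ a) (hk : 1 ≤ k) (hb : a + k - 1 ≤ N) :
    Rel1 N h0 h1 σ y xs (Finset.Icc a (a + k - 1)) =
      (∑ i ∈ Finset.Icc a (a + k - 1), Rel1 N h0 h1 σ y xs {i}) +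
        4 * h0 * h1 / σ ^ 2 *
          ∑ i ∈ Finset.Icc a (a + k - 2),
            (2 * (if xs i = xs (i + 1) then (1 : ℝ) else 0) - 1) := by
  have hσ' : σ ≠ 0 := ne_of_gt hσ
  set W : Finset ℕ := Finset.Icc a (a + k - 1) with hW
  -- per-index key identity
  have key : ∀ i ∈ Finset.Icc 1 N,
      (gaussLL h0 h1 σ y i (xs (i-1)) (xs i)
        - gaussLL h0 h1 σ y i (flipSeq W xs (i-1)) (flipSeq W xs i))
      - ∑ j ∈ W, (gaussLL h0 h1 σ y i (xs (i-1)) (xs i)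
        - gaussLL h0 h1 σ y i (flipSeq {j} xs (i-1)) (flipSeq {j} xs i))
      = if i ∈ Finset.Icc (a+1) (a+k-1)
          then 4*h0*h1/σ^2 * (2*(if xs (i-1) = xs i then (1:ℝ) else 0) - 1) else 0 := by
    intro i hi
    simp only [Finset.mem_Icc] at hi
    set t : ℕ → ℝ := fun j => gaussLL h0 h1 σ y i (xs (i-1)) (xs i)
        - gaussLL h0 h1 σ y i (flipSeq {j} xs (i-1)) (flipSeq {j} xs i) with ht
    have hne : i - 1 ≠ i := by omega
    have hsplit : ∑ j ∈ W, t j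
        = (if i-1 ∈ W then t (i-1) else 0) + (if i ∈ W then t i else 0) := by
      rw [← Finset.sum_ite_eq' W (i-1) t, ← Finset.sum_ite_eq' W i t,
        ← Finset.sum_add_distrib]
      refine Finset.sum_congr rfl fun j hj => ?_
      by_cases h1' : j = i - 1
      · subst h1'; simp [hne]
      · by_cases h2' : j = i
        · subst h2'; simp [Ne.symm hne]
        · have z : t j = 0 := by
            simp [ht, flipSeq, Finset.mem_singleton, Ne.symm h1', Ne.symm h2']
          simp [h1', h2', z]
    rw [hsplit]
    have e3 : flipSeq {i-1} xs (i-1) = !(xs (i-1)) := by simp [flipSeq]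
    have e4 : flipSeq {i-1} xs i = xs i := by
      simp [flipSeq, Finset.mem_singleton, Ne.symm hne]
    have e5 : flipSeq {i} xs (i-1) = xs (i-1) := by
      simp [flipSeq, Finset.mem_singleton, hne]
    have e6 : flipSeq {i} xs i = !(xs i) := by simp [flipSeq]
    by_cases hm1 : i - 1 ∈ W <;> by_cases hm : i ∈ W <;>
      simp only [hW, Finset.mem_Icc] at hm1 hm
    · -- both in W : interior case
      have f1 : flipSeq W xs (i-1) = !(xs (i-1)) := by
        simp [flipSeq, hW, Finset.mem_Icc, hm1]
      have f2 : flipSeq W xs i = !(xs i) := by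
        simp [flipSeq, hW, Finset.mem_Icc, hm]
      rw [if_pos (by simp only [hW, Finset.mem_Icc]; omega),
        if_pos (by simp only [hW, Finset.mem_Icc]; omega),
        if_pos (Finset.mem_Icc.mpr (by omega)), f1, f2]
      simp only [ht, e3, e4, e5, e6]
      linarith [gaussLL_interior h0 h1 σ hσ' y i (xs (i-1)) (xs i)]
    · -- i-1 ∈ W, i ∉ W
      have f1 : flipSeq W xs (i-1) = !(xs (i-1)) := by
        simp [flipSeq, hW, Finset.mem_Icc, hm1]
      have f2 : flipSeq W xs i = xs i := by
        simp only [flipSeq, hW, Finset.mem_Icc]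
        rw [if_neg hm]
      rw [if_pos (by simp only [hW, Finset.mem_Icc]; omega),
        if_neg (by simp only [hW, Finset.mem_Icc]; exact hm),
        if_neg (by simp only [Finset.mem_Icc]; omega), f1, f2]
      simp only [ht, e3, e4]
      ring
    · -- i-1 ∉ W, i ∈ W
      have f1 : flipSeq W xs (i-1) = xs (i-1) := by
        simp only [flipSeq, hW, Finset.mem_Icc]
        rw [if_neg hm1]
      have f2 : flipSeq W xs i = !(xs i) := by
        simp [flipSeq, hW, Finset.mem_Icc, hm]
      rw [if_neg (by simp only [hW, Finset.mem_Icc]; exact hm1),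
        if_pos (by simp only [hW, Finset.mem_Icc]; omega),
        if_neg (by simp only [Finset.mem_Icc]; omega), f1, f2]
      simp only [ht, e5, e6]
      ring
    · -- neither
      have f1 : flipSeq W xs (i-1) = xs (i-1) := by
        simp only [flipSeq, hW, Finset.mem_Icc]
        rw [if_neg hm1]
      have f2 : flipSeq W xs i = xs i := by
        simp only [flipSeq, hW, Finset.mem_Icc]
        rw [if_neg hm]
      rw [if_neg (by simp only [hW, Finset.mem_Icc]; exact hm1),
        if_neg (by simp only [hW, Finset.mem_Icc]; exact hm),
        if_neg (by simp only [Finset.mem_Icc]; omega), f1, f2]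
      ring
  -- assemble
  have main : ∑ i ∈ Finset.Icc 1 N,
      ((gaussLL h0 h1 σ y i (xs (i-1)) (xs i)
        - gaussLL h0 h1 σ y i (flipSeq W xs (i-1)) (flipSeq W xs i))
      - ∑ j ∈ W, (gaussLL h0 h1 σ y i (xs (i-1)) (xs i)
        - gaussLL h0 h1 σ y i (flipSeq {j} xs (i-1)) (flipSeq {j} xs i)))
      = 4 * h0 * h1 / σ ^ 2 *
          ∑ i ∈ Finset.Icc a (a + k - 2),
            (2 * (if xs i = xs (i + 1) then (1 : ℝ) else 0) - 1) := by
    rw [Finset.sum_congr rfl key, Finset.sum_ite_mem,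
      Finset.inter_eq_right.mpr (by intro x hx; simp only [Finset.mem_Icc] at *; omega)]
    have himg : Finset.Icc (a+1) (a+k-1) = Finset.image (· + 1) (Finset.Icc a (a+k-2)) := by
      ext x
      simp only [Finset.mem_Icc, Finset.mem_image]
      constructor
      · intro h; exact ⟨x - 1, ⟨by omega, by omega⟩, by omega⟩
      · rintro ⟨j, hj, rfl⟩; omega
    rw [himg, Finset.sum_image (by intro p _ q _ h; simp only at h; omega), Finset.mul_sum]
    refine Finset.sum_congr rfl fun j hj => ?_
    simp
  -- rewrite goal in terms of sums
  simp only [Rel1, Lam1, ← Finset.sum_sub_distrib]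
  rw [Finset.sum_comm]
  rw [Finset.sum_sub_distrib] at main
  linarith [main]
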